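/- The k-linear map sending the basis element x̂_i of 𝔤 to the derivation D_i := −Σ_{r=1}^n φ^r_i·(pderiv r) of MvPolynomial (Fin n) k is a homomorphism of Lie algebras (equivalently, ⁅D_i, D_j⁆ = Σ_{s=1}^n C^s_{ij}·D_s for all i, j) if and only if the matrix φ satisfies Σ_l (φ^l_j·(pderiv l)(φ^k_i) − φ^l_i·(pderiv l)(φ^k_j)) = Σ_s C^s_{ij}·φ^k_s for all i, j, k. -/

import Mathlib

/-!
A derivation of `MvPolynomial σ R` is determined by its values on the variables `X m`.
On `X m`, the bracket `⁅D i, D j⁆` and the combination `∑ s, C s i j • D s` evaluate to the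
negatives of the two sides of the structure equation, so the two conditions are equivalent.
-/

open MvPolynomial

theorem Derivation.sum_apply {R A M ι : Type*} [CommSemiring R] [CommSemiring A]
    [AddCommMonoid M] [Algebra R A] [Module A M] [Module R M]
    (s : Finset ι) (D : ι → Derivation R A M) (a : A) :
    (∑ i ∈ s, D i) a = ∑ i ∈ s, D i a := by
  rw [← Derivation.coeFnAddMonoidHom_apply, map_sum, Finset.sum_apply]
  rfl

theorem Derivation.lie_neg_neg {R A : Type*} [CommRing R] [CommRing A] [Algebra R A]
    (D₁ D₂ : Derivation R A A) : ⁅-D₁, -D₂⁆ = ⁅D₁, D₂⁆ := by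
  ext a
  simp only [Derivation.commutator_apply, Derivation.neg_apply, map_neg, neg_neg]

namespace MvPolynomial

variable {R σ : Type*} [Fintype σ]

theorem sum_smul_pderiv_apply [CommSemiring R] (a : σ → MvPolynomial σ R)
    (p : MvPolynomial σ R) :
    (∑ r, a r • pderiv r) p = ∑ r, a r * pderiv r p := by
  simp only [Derivation.sum_apply, Derivation.smul_apply, smul_eq_mul]

theorem sum_smul_pderiv_X [CommSemiring R] [DecidableEq σ] (a : σ → MvPolynomial σ R) (m : σ) :
    (∑ r, a r • pderiv r) (X m) = a m := by
  simp [sum_smul_pderiv_apply, pderiv_X, Pi.single_apply]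

theorem lie_sum_smul_pderiv_X [CommRing R] [DecidableEq σ] (a c : σ → MvPolynomial σ R)
    (m : σ) :
    ⁅(∑ r, a r • pderiv r : Derivation R (MvPolynomial σ R) (MvPolynomial σ R)),
      ∑ r, c r • pderiv r⁆ (X m)
      = ∑ r, (a r * pderiv r (c m) - c r * pderiv r (a m)) := by
  rw [Derivation.commutator_apply, sum_smul_pderiv_X, sum_smul_pderiv_X,
    sum_smul_pderiv_apply, sum_smul_pderiv_apply, Finset.sum_sub_distrib]

end MvPolynomial

theorem twisted_derivations_iff_structure_equation_general
    (k : Type*) [Field k] (n : ℕ)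
    (C : Fin n → Fin n → Fin n → k)
    (φ : Fin n → Fin n → MvPolynomial (Fin n) k)
    (D : Fin n → Derivation k (MvPolynomial (Fin n) k) (MvPolynomial (Fin n) k))
    (hD : ∀ i, D i = -∑ r, φ r i • pderiv r) :
    (∀ i j, ⁅D i, D j⁆ = ∑ s, C s i j • D s) ↔
      (∀ i j m, ∑ l, (φ l j * pderiv l (φ m i) - φ l i * pderiv l (φ m j))
          = ∑ s, C s i j • φ m s) := by
  have D_X (i m) : D i (X m) = -φ m i := by
    rw [hD, Derivation.neg_apply, sum_smul_pderiv_X]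
  have bracket_X (i j m) : ⁅D i, D j⁆ (X m)
      = -∑ l, (φ l j * pderiv l (φ m i) - φ l i * pderiv l (φ m j)) := by
    rw [hD, hD, Derivation.lie_neg_neg, lie_sum_smul_pderiv_X, ← Finset.sum_neg_distrib]
    simp only [neg_sub]
  have combination_X (i j m) : (∑ s, C s i j • D s) (X m) = -∑ s, C s i j • φ m s := by
    simp only [Derivation.sum_apply, Derivation.smul_apply, D_X, smul_neg,
      Finset.sum_neg_distrib]
  simp only [MvPolynomial.derivation_ext_iff, bracket_X, combination_X, neg_inj]

/-- For `D i = -∑ r, φ r i • pderiv r` on `MvPolynomial (Fin n) k`,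
the bracket identity `⁅D i, D j⁆ = ∑ s, C s i j • D s` (i.e. `x̂ i ↦ D i` is a
Lie algebra homomorphism) holds if and only if `φ` satisfies the structure
equation. -/
theorem twisted_derivations_iff_structure_equation
    (k : Type*) [Field k] [CharZero k] (n : ℕ) (hn : 0 < n)
    (𝔤 : Type*) [LieRing 𝔤] [LieAlgebra k 𝔤]
    (b : Module.Basis (Fin n) k 𝔤)
    (C : Fin n → Fin n → Fin n → k)
    (hC : ∀ i j, ⁅b i, b j⁆ = ∑ s, C s i j • b s)
    (φ : Fin n → Fin n → MvPolynomial (Fin n) k)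
    (D : Fin n → Derivation k (MvPolynomial (Fin n) k) (MvPolynomial (Fin n) k))
    (hD : ∀ i, D i = -∑ r, φ r i • pderiv r) :
    (∀ i j, ⁅D i, D j⁆ = ∑ s, C s i j • D s) ↔
      (∀ i j m, ∑ l, (φ l j * pderiv l (φ m i) - φ l i * pderiv l (φ m j))
          = ∑ s, C s i j • φ m s) :=
  twisted_derivations_iff_structure_equation_general k n C φ D hD
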